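/- arXiv:0909.3491 — 2 statements merged into one kernel-verified Lean document; each statement's English description precedes it below -/
import Mathlib

section
/- Let Y be a half-space in a Banach space X almost invariant under T ∈ L(X). Then U_T(Y) = Y + TY is a half-space (after taking closure if needed the sum Y + F is already closed), and the codimension of Y in U_T(Y) equals d_{Y,T}. -/
/-- A half-space: a closed subspace with infinite dimension and infinite codimension. -/
def IsHalfSpace {X : Type*} [NormedAddCommGroup X] [NormedSpace ℂ X]
    (Y : Submodule ℂ X) : Prop :=
  IsClosed (Y : Set X) ∧ ¬ FiniteDimensional ℂ Y ∧ ¬ FiniteDimensional ℂ (X ⧸ Y)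

/-- `errDim Y T` is the minimal dimension of a finite-dimensional subspace `F`
with `T Y ⊆ Y + F` (and `⊤` if no such `F` exists). -/
noncomputable def errDim {X : Type*} [NormedAddCommGroup X] [NormedSpace ℂ X]
    (Y : Submodule ℂ X) (T : X →L[ℂ] X) : ℕ∞ :=
  sInf {n : ℕ∞ | ∃ F : Submodule ℂ X, FiniteDimensional ℂ F ∧
    (Module.finrank ℂ F : ℕ∞) = n ∧ Y.map (T : X →ₗ[ℂ] X) ≤ Y ⊔ F}

/-!
Modulo `Y`, the space `U = Y + TY` becomes the subspace `U/Y` of `X/Y`, and it lies inside the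
image of any `F` with `TY ⊆ Y + F`; hence `dim (U/Y) ≤ dim F`. Conversely, a complement of `Y` in
`U` is such an `F` of dimension exactly `dim (U/Y)`, and `U = Y + F` is closed as the sum of a
closed and a finite-dimensional subspace. Since `X/U` is a quotient of `X/Y` by the
finite-dimensional `U/Y`, the codimension of `U` stays infinite.
-/

open Module

namespace Submodule

section Ring

variable {R M : Type*} [Ring R] [AddCommGroup M] [Module R M]

noncomputable def quotientComapSubtypeEquivMapMkQ (Y U : Submodule R M) :
    (U ⧸ Y.comap U.subtype) ≃ₗ[R] U.map Y.mkQ :=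
  quotEquivOfEq _ _ (by rw [LinearMap.ker_comp, ker_mkQ]) ≪≫ₗ
    (Y.mkQ ∘ₗ U.subtype).quotKerEquivRange ≪≫ₗ
    LinearEquiv.ofEq _ _ (by rw [LinearMap.range_comp, range_subtype])

theorem map_mkQ_le_map_mkQ_of_le_sup {Y U F : Submodule R M} (h : U ≤ Y ⊔ F) :
    U.map Y.mkQ ≤ F.map Y.mkQ := by
  simpa only [map_sup, mkQ_map_self, bot_sup_eq] using map_mono (f := Y.mkQ) h

theorem finite_quotient_of_le {Y U : Submodule R M} (h : Y ≤ U)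
    [Module.Finite R (U ⧸ Y.comap U.subtype)] [Module.Finite R (M ⧸ U)] :
    Module.Finite R (M ⧸ Y) :=
  have : Module.Finite R (U.map Y.mkQ) := .equiv (quotientComapSubtypeEquivMapMkQ Y U)
  have : Module.Finite R ((M ⧸ Y) ⧸ U.map Y.mkQ) :=
    .equiv (quotientQuotientEquivQuotient Y U h).symm
  .of_submodule_quotient (U.map Y.mkQ)

end Ring

section DivisionRing

variable {K V : Type*} [DivisionRing K] [AddCommGroup V] [Module K V] {Y U F : Submodule K V}

theorem finiteDimensional_quotient_comap_subtype_of_le_sup [FiniteDimensional K F]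
    (h : U ≤ Y ⊔ F) : FiniteDimensional K (U ⧸ Y.comap U.subtype) :=
  have := finiteDimensional_of_le (map_mkQ_le_map_mkQ_of_le_sup h)
  .equiv (quotientComapSubtypeEquivMapMkQ Y U).symm

theorem finrank_quotient_comap_subtype_le_of_le_sup [FiniteDimensional K F]
    (h : U ≤ Y ⊔ F) : finrank K (U ⧸ Y.comap U.subtype) ≤ finrank K F :=
  calc finrank K (U ⧸ Y.comap U.subtype) = finrank K (U.map Y.mkQ) :=
        (quotientComapSubtypeEquivMapMkQ Y U).finrank_eq
    _ ≤ finrank K (F.map Y.mkQ) := finrank_mono (map_mkQ_le_map_mkQ_of_le_sup h)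
    _ ≤ finrank K F := finrank_map_le _ _

theorem exists_sup_eq_of_le (h : Y ≤ U) :
    ∃ F : Submodule K V, Y ⊔ F = U ∧ Nonempty (F ≃ₗ[K] U ⧸ Y.comap U.subtype) := by
  obtain ⟨C, hC⟩ := (Y.comap U.subtype).exists_isCompl
  refine ⟨C.map U.subtype, ?_, ⟨?_⟩⟩
  · rw [← inf_eq_right.mpr h, ← map_comap_subtype, ← map_sup, hC.sup_eq_top, map_subtype_top]
  · exact (C.equivMapOfInjective _ U.injective_subtype).symm ≪≫ₗ
      (quotientEquivOfIsCompl _ C hC).symm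

end DivisionRing

end Submodule

open Submodule

theorem errDim_eq_finrank_quotient {X : Type*} [NormedAddCommGroup X] [NormedSpace ℂ X]
    (Y : Submodule ℂ X) (T : X →L[ℂ] X)
    [FiniteDimensional ℂ
      (↥(Y ⊔ Y.map (T : X →ₗ[ℂ] X)) ⧸ Y.comap (Y ⊔ Y.map (T : X →ₗ[ℂ] X)).subtype)] :
    errDim Y T = (finrank ℂ (↥(Y ⊔ Y.map (T : X →ₗ[ℂ] X)) ⧸
      Y.comap (Y ⊔ Y.map (T : X →ₗ[ℂ] X)).subtype) : ℕ∞) := by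
  refine le_antisymm ?_ (le_sInf ?_)
  · obtain ⟨F, hYF, ⟨e⟩⟩ :=
      exists_sup_eq_of_le (le_sup_left (a := Y) (b := Y.map (T : X →ₗ[ℂ] X)))
    have : FiniteDimensional ℂ F := .equiv e.symm
    exact sInf_le ⟨F, this, by rw [e.finrank_eq], le_sup_right.trans hYF.ge⟩
  · rintro n ⟨F, hF, rfl, hTF⟩
    exact_mod_cast finrank_quotient_comap_subtype_le_of_le_sup (sup_le le_sup_left hTF)

theorem going_upwards_halfspace_general
    {X : Type*} [NormedAddCommGroup X] [NormedSpace ℂ X]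
    (Y : Submodule ℂ X) (hY : IsHalfSpace Y) (T : X →L[ℂ] X)
    (hai : ∃ F : Submodule ℂ X, FiniteDimensional ℂ F ∧ Y.map (T : X →ₗ[ℂ] X) ≤ Y ⊔ F) :
    IsHalfSpace (Y ⊔ Y.map (T : X →ₗ[ℂ] X)) ∧
      (Module.finrank ℂ (↥(Y ⊔ Y.map (T : X →ₗ[ℂ] X)) ⧸ Y.comap (Y ⊔ Y.map (T : X →ₗ[ℂ] X)).subtype) : ℕ∞) =
        errDim Y T := by
  obtain ⟨hYclosed, hYinf, hYcoinf⟩ := hY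
  obtain ⟨F, hF, hTF⟩ := hai
  set U := Y ⊔ Y.map (T : X →ₗ[ℂ] X)
  have hYU : Y ≤ U := le_sup_left
  have := finiteDimensional_quotient_comap_subtype_of_le_sup (sup_le le_sup_left hTF : U ≤ Y ⊔ F)
  obtain ⟨F₀, hYF₀, ⟨e⟩⟩ := exists_sup_eq_of_le hYU
  have : FiniteDimensional ℂ F₀ := .equiv e.symm
  refine ⟨⟨?_, fun _ ↦ hYinf (finiteDimensional_of_le hYU), fun _ ↦ hYcoinf ?_⟩,
    (errDim_eq_finrank_quotient Y T).symm⟩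
  · exact hYF₀ ▸ isClosed_sup_finiteDimensional Y F₀ hYclosed
  · exact finite_quotient_of_le hYU

theorem going_upwards_halfspace
    {X : Type*} [NormedAddCommGroup X] [NormedSpace ℂ X] [CompleteSpace X]
    (Y : Submodule ℂ X) (hY : IsHalfSpace Y) (T : X →L[ℂ] X)
    (hai : ∃ F : Submodule ℂ X, FiniteDimensional ℂ F ∧ Y.map (T : X →ₗ[ℂ] X) ≤ Y ⊔ F) :
    IsHalfSpace (Y ⊔ Y.map (T : X →ₗ[ℂ] X)) ∧
      (Module.finrank ℂ (↥(Y ⊔ Y.map (T : X →ₗ[ℂ] X)) ⧸ Y.comap (Y ⊔ Y.map (T : X →ₗ[ℂ] X)).subtype) : ℕ∞) =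
        errDim Y T :=
  going_upwards_halfspace_general Y hY T hai
end

section
/- Let A be a norm-closed algebra of bounded operators on a Banach space X generated by finitely many pairwise commuting operators T₁,…,T_n. If A has an almost invariant half-space, then A has an invariant half-space. -/
open Module Submodule Filter Topology Cardinal LinearMap

namespace Submodule

section Defect

variable {K X : Type*} [Field K] [AddCommGroup X] [Module K X] {Y : Submodule K X}
  {S : X →ₗ[K] X}

def defectMap (Y : Submodule K X) : (X →ₗ[K] X) →ₗ[K] Y →ₗ[K] X ⧸ Y where
  toFun S := Y.mkQ ∘ₗ S ∘ₗ Y.subtype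
  map_add' _ _ := rfl
  map_smul' _ _ := rfl

@[simp]
lemma defectMap_apply (Y : Submodule K X) (S : X →ₗ[K] X) (y : Y) :
    Y.defectMap S y = Y.mkQ (S y) :=
  rfl

lemma range_defectMap (Y : Submodule K X) (S : X →ₗ[K] X) :
    range (Y.defectMap S) = (Y.map S).map Y.mkQ := by
  change range (Y.mkQ ∘ₗ S ∘ₗ Y.subtype) = _
  rw [range_comp, range_comp, range_subtype]

lemma rank_defectMap_lt_aleph0 {F : Submodule K X} [FiniteDimensional K F]
    (h : Y.map S ≤ Y ⊔ F) : (Y.defectMap S).rank < ℵ₀ := by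
  have hle : range (Y.defectMap S) ≤ F.map Y.mkQ := by
    rw [range_defectMap]
    refine (map_mono h).trans ?_
    rw [map_sup, mkQ_map_self, bot_sup_eq]
  exact (Submodule.rank_mono hle).trans_lt (rank_lt_aleph0 K (F.map Y.mkQ))

lemma not_finite_ker_defectMap (hY : ¬ Module.Finite K Y) (hS : (Y.defectMap S).rank < ℵ₀) :
    ¬ Module.Finite K (ker (Y.defectMap S)) := by
  intro hker
  apply hY
  rw [← rank_lt_aleph0_iff, ← rank_range_add_rank_ker (Y.defectMap S)]
  exact add_lt_aleph0 hS (rank_lt_aleph0 K _)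

lemma not_finite_quotient_comap_mkQ (hY : ¬ Module.Finite K (X ⧸ Y))
    (D : Submodule K (X ⧸ Y)) [FiniteDimensional K D] :
    ¬ Module.Finite K (X ⧸ D.comap Y.mkQ) := by
  intro hD
  have hquot := Module.Finite.equiv (quotientQuotientEquivQuotient Y _ (le_comap_mkQ Y D)).symm
  rw [map_comap_eq_of_surjective Y.mkQ_surjective] at hquot
  apply hY
  rw [← rank_lt_aleph0_iff, ← rank_quotient_add_rank D]
  exact add_lt_aleph0 (rank_lt_aleph0 K _) (rank_lt_aleph0 K _)

end Defect

section InvariantCore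

variable {R M : Type*} [Semiring R] [AddCommMonoid M] [Module R M] [TopologicalSpace M]
  {A : Set (M →L[R] M)} {N : Submodule R M}

def invariantCore (A : Set (M →L[R] M)) (N : Submodule R M) : Submodule R M :=
  N ⊓ ⨅ S ∈ A, N.comap (S : M →ₗ[R] M)

lemma mem_invariantCore {x : M} : x ∈ invariantCore A N ↔ x ∈ N ∧ ∀ S ∈ A, S x ∈ N := by
  simp [invariantCore, mem_iInf]

lemma invariantCore_le : invariantCore A N ≤ N :=
  inf_le_left

lemma le_invariantCore {W : Submodule R M} (hW : W ≤ N)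
    (hA : ∀ S ∈ A, W.map (S : M →ₗ[R] M) ≤ N) : W ≤ invariantCore A N :=
  fun _ hx => mem_invariantCore.2 ⟨hW hx, fun S hS => hA S hS (mem_map_of_mem hx)⟩

lemma map_invariantCore_le (hA : ∀ S ∈ A, ∀ T ∈ A, T * S ∈ A) {S : M →L[R] M} (hS : S ∈ A) :
    (invariantCore A N).map (S : M →ₗ[R] M) ≤ invariantCore A N := by
  rintro _ ⟨x, hx, rfl⟩
  rw [SetLike.mem_coe, mem_invariantCore] at hx
  rw [mem_invariantCore]
  exact ⟨hx.2 S hS, fun T hT => hx.2 (T * S) (hA S hS T hT)⟩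

lemma isClosed_invariantCore (hN : IsClosed (N : Set M)) :
    IsClosed (invariantCore A N : Set M) := by
  have : (invariantCore A N : Set M) = (N : Set M) ∩ ⋂ S ∈ A, S ⁻¹' (N : Set M) := by
    ext x
    simp [mem_invariantCore]
  rw [this]
  exact hN.inter (isClosed_biInter fun (S : M →L[R] M) _ => hN.preimage S.continuous)

end InvariantCore

section Normed

variable {𝕜 X : Type*} [NontriviallyNormedField 𝕜] [NormedAddCommGroup X] [NormedSpace 𝕜 X]
  {Y : Submodule 𝕜 X} {V : Submodule 𝕜 (X →L[𝕜] X)}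

lemma isClosed_setOf_rank_defectMap_le [CompleteSpace 𝕜] (hY : IsClosed (Y : Set X)) (k : ℕ) :
    IsClosed {S : X →L[𝕜] X | (Y.defectMap S).rank ≤ k} := by
  have := hY
  have hcont : Continuous fun S : X →L[𝕜] X => Y.mkQL ∘L S ∘L Y.subtypeL := by fun_prop
  convert ((isOpen_setOfPred_nat_le_rank (k + 1)).preimage hcont).isClosed_compl using 1
  ext S
  simp only [Set.mem_ofPred_eq, Set.mem_compl_iff, Set.mem_preimage, Nat.cast_add_one,
    natCast_add_one_le_iff, not_lt]
  rfl

lemma rank_defectMap_le_of_eventually {k : ℕ} (S₀ S : V)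
    (h : ∀ᶠ T : V in 𝓝 S₀, (Y.defectMap (T : X →L[𝕜] X)).rank ≤ k) :
    (Y.defectMap (S : X →L[𝕜] X)).rank ≤ ↑(k + k) := by
  have htend : Tendsto (fun t : 𝕜 => S₀ + t • S) (𝓝[≠] 0) (𝓝 S₀) := by
    have : Continuous fun t : 𝕜 => S₀ + t • S := by fun_prop
    simpa using (this.tendsto 0).mono_left nhdsWithin_le_nhds
  obtain ⟨t, hk, ht⟩ := ((htend.eventually h).and self_mem_nhdsWithin).exists
  have hsum : t • Y.defectMap (S : X →L[𝕜] X) =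
      Y.defectMap ((S₀ + t • S : V) : X →L[𝕜] X) + -Y.defectMap (S₀ : X →L[𝕜] X) := by
    simp
  calc (Y.defectMap (S : X →L[𝕜] X)).rank = (t • Y.defectMap (S : X →L[𝕜] X)).rank := by
        rw [LinearMap.rank, LinearMap.rank, range_smul _ _ ht]
    _ ≤ (Y.defectMap ((S₀ + t • S : V) : X →L[𝕜] X)).rank
        + (-Y.defectMap (S₀ : X →L[𝕜] X)).rank := hsum ▸ rank_add_le _ _
    _ ≤ ↑(k + k) := by
        have hneg : (-Y.defectMap (S₀ : X →L[𝕜] X)).rank = (Y.defectMap (S₀ : X →L[𝕜] X)).rank :=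
          congrArg (fun p : Submodule 𝕜 (X ⧸ Y) => Module.rank 𝕜 p) (range_neg _)
        rw [Nat.cast_add, hneg]
        exact add_le_add hk h.self_of_nhds

theorem exists_forall_rank_defectMap_le [CompleteSpace 𝕜] [CompleteSpace X]
    (hY : IsClosed (Y : Set X)) (hV : IsClosed (V : Set (X →L[𝕜] X)))
    (hfin : ∀ S ∈ V, (Y.defectMap S).rank < ℵ₀) :
    ∃ m : ℕ, ∀ S ∈ V, (Y.defectMap S).rank ≤ m := by
  have : CompleteSpace V := hV.completeSpace_coe
  have hcover : ⋃ k : ℕ, Subtype.val ⁻¹' {S : X →L[𝕜] X | (Y.defectMap S).rank ≤ k} =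
      (Set.univ : Set V) := by
    refine Set.eq_univ_of_forall fun S => Set.mem_iUnion.2 ?_
    obtain ⟨k, hk⟩ := lt_aleph0.1 (hfin S S.2)
    exact ⟨k, hk.le⟩
  obtain ⟨k, S₀, hS₀⟩ := nonempty_interior_of_iUnion_of_closed
    (fun k => (isClosed_setOf_rank_defectMap_le hY k).preimage continuous_subtype_val) hcover
  exact ⟨k + k, fun S hS =>
    rank_defectMap_le_of_eventually S₀ ⟨S, hS⟩ (mem_interior_iff_mem_nhds.1 hS₀)⟩

theorem exists_rank_defectMap_isMax [CompleteSpace 𝕜] [CompleteSpace X]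
    (hY : IsClosed (Y : Set X)) (hV : IsClosed (V : Set (X →L[𝕜] X)))
    (hfin : ∀ S ∈ V, (Y.defectMap S).rank < ℵ₀) :
    ∃ S₀ ∈ V, ∀ S ∈ V, (Y.defectMap S).rank ≤ (Y.defectMap S₀).rank := by
  obtain ⟨m, hm⟩ := exists_forall_rank_defectMap_le hY hV hfin
  obtain ⟨n, ⟨S₀, hS₀, hn⟩, hgreatest⟩ :=
    BddAbove.exists_isGreatest_of_nonempty (S := {n : ℕ | ∃ S ∈ V, (Y.defectMap S).rank = n})
      ⟨m, by rintro _ ⟨S, hS, hSn⟩; exact_mod_cast hSn ▸ hm S hS⟩ ⟨0, 0, V.zero_mem, by simp⟩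
  refine ⟨S₀, hS₀, fun S hS => ?_⟩
  obtain ⟨k, hk⟩ := lt_aleph0.1 (hfin S hS)
  rw [hk, hn]
  exact_mod_cast hgreatest ⟨S, hS, hk⟩

theorem defectMap_apply_mem_range_of_isMax [CompleteSpace 𝕜] (hY : IsClosed (Y : Set X))
    {S₀ S : X →L[𝕜] X} (hS₀ : S₀ ∈ V) (hS : S ∈ V) (hfin : (Y.defectMap S₀).rank < ℵ₀)
    (hmax : ∀ T ∈ V, (Y.defectMap T).rank ≤ (Y.defectMap S₀).rank) {y : Y}
    (hy : Y.defectMap S₀ y = 0) : Y.defectMap S y ∈ range (Y.defectMap S₀) := by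
  have := hY
  by_contra hyS
  obtain ⟨n, hn⟩ := lt_aleph0.1 hfin
  obtain ⟨s, hcard, hs⟩ := LinearMap.le_rank_iff_exists_linearIndependent_finset.1 hn.ge
  -- `f₀ + t • f₁` lists `defectMap (S₀ + t • S)` on `s`, followed by `defectMap S y`.
  let f₀ : Option s → X ⧸ Y := fun o => o.casesOn' (Y.defectMap S y) fun x => Y.defectMap S₀ x
  let f₁ : Option s → X ⧸ Y := fun o => o.casesOn' 0 fun x => Y.defectMap S x
  have hf₀ : LinearIndependent 𝕜 f₀ := linearIndependent_option'.2
    ⟨hs, fun h => hyS (span_le.2 (Set.range_subset_iff.2 fun x => mem_range_self _ _) h)⟩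
  obtain ⟨t, hli, ht⟩ : ∃ t : 𝕜, LinearIndependent 𝕜 (f₀ + t • f₁) ∧ t ∈ ({0}ᶜ : Set 𝕜) := by
    have : Tendsto (fun t : 𝕜 => f₀ + t • f₁) (𝓝[≠] 0) (𝓝 f₀) := by
      have : Continuous fun t : 𝕜 => f₀ + t • f₁ := by fun_prop
      simpa using (this.tendsto 0).mono_left nhdsWithin_le_nhds
    exact ((this.eventually hf₀.eventually).and self_mem_nhdsWithin).exists
  have hmem : ∀ o, (f₀ + t • f₁) o ∈ range (Y.defectMap (S₀ + t • S)) := by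
    rintro (_ | x)
    · have hy' : Y.mkQ (S₀ y) = 0 := hy
      refine ⟨t⁻¹ • y, ?_⟩
      simp [f₀, f₁, hy', smul_smul, inv_mul_cancel₀ (show t ≠ 0 from ht)]
    · exact ⟨x, by simp [f₀, f₁]⟩
  have hcardle : ((n + 1 : ℕ) : Cardinal) ≤ (Y.defectMap (S₀ + t • S)).rank := by
    have hli' : LinearIndependent 𝕜
        (fun o => (⟨(f₀ + t • f₁) o, hmem o⟩ : range (Y.defectMap (S₀ + t • S)))) :=
      .of_comp (range _).subtype hli
    simpa [LinearMap.rank, mk_option, hcard] using hli'.cardinal_le_rank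
  have hle := hcardle.trans ((hmax _ (V.add_mem hS₀ (V.smul_mem t hS))).trans hn.le)
  exact absurd (Nat.cast_le.1 hle) (Nat.not_succ_le_self n)

theorem map_subtype_ker_defectMap_le_invariantCore [CompleteSpace 𝕜] (hY : IsClosed (Y : Set X))
    {S₀ : X →L[𝕜] X} (hS₀ : S₀ ∈ V) (hfin : (Y.defectMap S₀).rank < ℵ₀)
    (hmax : ∀ T ∈ V, (Y.defectMap T).rank ≤ (Y.defectMap S₀).rank) :
    (ker (Y.defectMap S₀)).map Y.subtype ≤
      invariantCore V ((range (Y.defectMap S₀)).comap Y.mkQ) := by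
  refine le_invariantCore ((map_subtype_le _ _).trans (le_comap_mkQ Y _)) ?_
  rintro S hS _ ⟨_, ⟨y, hy, rfl⟩, rfl⟩
  exact defectMap_apply_mem_range_of_isMax hY hS₀ hS hfin hmax hy

end Normed

end Submodule

theorem finitely_generated_commutative_almost_invariant_implies_invariant_general
    {X : Type*} [NormedAddCommGroup X] [NormedSpace ℂ X] [CompleteSpace X]
    (A : NonUnitalSubalgebra ℂ (X →L[ℂ] X))
    (hAc : IsClosed (A : Set (X →L[ℂ] X)))
    (h : ∃ Y : Submodule ℂ X, IsHalfSpace Y ∧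
      ∀ S ∈ A, ∃ F : Submodule ℂ X, FiniteDimensional ℂ F ∧ Y.map (S : X →ₗ[ℂ] X) ≤ Y ⊔ F) :
    ∃ Z : Submodule ℂ X, IsHalfSpace Z ∧ ∀ S ∈ A, Z.map (S : X →ₗ[ℂ] X) ≤ Z := by
  obtain ⟨Y, ⟨hYc, hYdim, hYcod⟩, hai⟩ := h
  have hfin : ∀ S ∈ A.toSubmodule, (Y.defectMap S).rank < ℵ₀ := fun S hS => by
    obtain ⟨F, _, hSF⟩ := hai S hS
    exact rank_defectMap_lt_aleph0 hSF
  obtain ⟨S₀, hS₀, hmax⟩ := exists_rank_defectMap_isMax hYc hAc hfin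
  have : FiniteDimensional ℂ (range (Y.defectMap S₀)) := rank_lt_aleph0_iff.1 (hfin S₀ hS₀)
  have hWZ := map_subtype_ker_defectMap_le_invariantCore hYc hS₀ (hfin S₀ hS₀) hmax
  refine ⟨invariantCore A.toSubmodule ((range (Y.defectMap S₀)).comap Y.mkQ),
    ⟨isClosed_invariantCore ?_, fun hZ => ?_, fun hZ => ?_⟩,
    fun S hS => map_invariantCore_le (fun S hS T hT => A.mul_mem hT hS) hS⟩
  · have := hYc
    exact (range (Y.defectMap S₀)).closed_of_finiteDimensional.preimage continuous_quot_mk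
  · have := Submodule.finiteDimensional_of_le hWZ
    exact not_finite_ker_defectMap hYdim (hfin S₀ hS₀)
      ((equivMapOfInjective _ Y.injective_subtype _).symm.finiteDimensional)
  · exact not_finite_quotient_comap_mkQ hYcod _
      (Module.Finite.of_surjective (hM := hZ) _ (factor_surjective invariantCore_le))

theorem finitely_generated_commutative_almost_invariant_implies_invariant
    {X : Type*} [NormedAddCommGroup X] [NormedSpace ℂ X] [CompleteSpace X]
    (n : ℕ) (T : Fin n → (X →L[ℂ] X))
    (hcomm : ∀ i j, Commute (T i) (T j))
    (A : NonUnitalSubalgebra ℂ (X →L[ℂ] X))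
    (hAc : IsClosed (A : Set (X →L[ℂ] X)))
    (hTA : ∀ i, T i ∈ A)
    (hAmin : ∀ B : NonUnitalSubalgebra ℂ (X →L[ℂ] X),
      IsClosed (B : Set (X →L[ℂ] X)) → (∀ i, T i ∈ B) → A ≤ B)
    (h : ∃ Y : Submodule ℂ X, IsHalfSpace Y ∧
      ∀ S ∈ A, ∃ F : Submodule ℂ X, FiniteDimensional ℂ F ∧ Y.map (S : X →ₗ[ℂ] X) ≤ Y ⊔ F) :
    ∃ Z : Submodule ℂ X, IsHalfSpace Z ∧ ∀ S ∈ A, Z.map (S : X →ₗ[ℂ] X) ≤ Z :=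
  finitely_generated_commutative_almost_invariant_implies_invariant_general A hAc h
end
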